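/- arXiv:2111.00113 — 2 statements merged into one kernel-verified Lean document; each statement's English description precedes it below -/
import Mathlib

section
/- Let B ∈ ℂ^{n×d} have full column rank, and let S ∈ ℂ^{s×n} be a subspace embedding with distortion ε ∈ (0,1) for the column span of B. Suppose SB = UT where U ∈ ℂ^{s×d} has orthonormal columns (U*U = I) and T ∈ ℂ^{d×d} is invertible. Then ((1−ε)/(1+ε))·κ₂(T) ≤ κ₂(B) ≤ ((1+ε)/(1−ε))·κ₂(T). -/
open Matrix

noncomputable def nrm2 {n : ℕ} (v : Fin n → ℂ) : ℝ :=
  ‖(WithLp.equiv 2 (Fin n → ℂ)).symm v‖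

noncomputable def sigmaMax {n d : ℕ} (M : Matrix (Fin n) (Fin d) ℂ) : ℝ :=
  sSup {r : ℝ | ∃ y : Fin d → ℂ, nrm2 y = 1 ∧ r = nrm2 (M.mulVec y)}

noncomputable def sigmaMin {n d : ℕ} (M : Matrix (Fin n) (Fin d) ℂ) : ℝ :=
  sInf {r : ℝ | ∃ y : Fin d → ℂ, nrm2 y = 1 ∧ r = nrm2 (M.mulVec y)}

/-! Since `S B = U T` with `U` an isometry, `‖T y‖ = ‖S (B y)‖` lies between `(1 - ε) ‖B y‖` and
`(1 + ε) ‖B y‖` for every `y`. Taking the supremum and the infimum over unit vectors, `σ_max T` and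
`σ_min T` lie within the same factors of `σ_max B` and `σ_min B`, and dividing gives the bounds on
`κ₂`. -/

theorem div_mem_Icc_of_mem_Icc {a b x y x' y' : ℝ} (ha : 0 < a) (hb : 0 < b)
    (hx : 0 ≤ x) (hy : 0 ≤ y) (hx' : x' ∈ Set.Icc (a * x) (b * x))
    (hy' : y' ∈ Set.Icc (a * y) (b * y)) :
    x / y ∈ Set.Icc (a / b * (x' / y')) (b / a * (x' / y')) := by
  obtain ⟨hax, hxb⟩ := hx'
  obtain ⟨hay, hyb⟩ := hy'
  -- for `y = 0` also `y' = 0`, and both quotients are the junk value `x / 0 = 0`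
  rcases hy.eq_or_lt with rfl | hy
  · obtain rfl : y' = 0 := by linarith
    simp
  · have hx'nonneg : 0 ≤ x' := (mul_nonneg ha.le hx).trans hax
    have hy'pos : 0 < y' := (mul_pos ha hy).trans_le hay
    constructor
    · rw [div_mul_div_comm, div_le_div_iff₀ (by positivity) hy]
      nlinarith [mul_le_mul_of_nonneg_left hxb hy.le, mul_le_mul_of_nonneg_left hay hx'nonneg]
    · rw [div_mul_div_comm, div_le_div_iff₀ hy (by positivity)]
      nlinarith [mul_le_mul_of_nonneg_left hax hy'pos.le, mul_le_mul_of_nonneg_left hyb hx]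

noncomputable def condNum {n d : ℕ} (M : Matrix (Fin n) (Fin d) ℂ) : ℝ :=
  sigmaMax M / sigmaMin M

section SingularValues

open scoped Matrix.Norms.L2Operator

variable {m n d : ℕ}

theorem nrm2_mulVec_le (M : Matrix (Fin n) (Fin d) ℂ) (v : Fin d → ℂ) :
    nrm2 (M *ᵥ v) ≤ ‖M‖ * nrm2 v :=
  M.l2_opNorm_mulVec _

theorem nrm2_mulVec_of_conjTranspose_mul_self_eq_one {U : Matrix (Fin n) (Fin d) ℂ}
    (hU : Uᴴ * U = 1) (v : Fin d → ℂ) : nrm2 (U *ᵥ v) = nrm2 v := by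
  simp only [nrm2, WithLp.equiv_symm_apply, norm_eq_sqrt_re_inner (𝕜 := ℂ),
    EuclideanSpace.inner_toLp_toLp]
  rw [Matrix.star_mulVec, dotProduct_comm (U *ᵥ v), Matrix.dotProduct_mulVec,
    Matrix.vecMul_vecMul, hU, Matrix.vecMul_one, dotProduct_comm (star v)]

variable (M : Matrix (Fin m) (Fin d) ℂ) (N : Matrix (Fin n) (Fin d) ℂ)

theorem sigmaMax_nonneg : 0 ≤ sigmaMax M :=
  Real.sSup_nonneg (by rintro _ ⟨y, -, rfl⟩; exact norm_nonneg _)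

theorem sigmaMin_nonneg : 0 ≤ sigmaMin M :=
  Real.sInf_nonneg (by rintro _ ⟨y, -, rfl⟩; exact norm_nonneg _)

theorem nrm2_mulVec_le_sigmaMax {y : Fin d → ℂ} (hy : nrm2 y = 1) :
    nrm2 (M *ᵥ y) ≤ sigmaMax M :=
  le_csSup ⟨‖M‖, by rintro _ ⟨y, hy, rfl⟩; simpa [hy] using nrm2_mulVec_le M y⟩ ⟨y, hy, rfl⟩

theorem sigmaMin_le_nrm2_mulVec {y : Fin d → ℂ} (hy : nrm2 y = 1) :
    sigmaMin M ≤ nrm2 (M *ᵥ y) :=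
  csInf_le ⟨0, by rintro _ ⟨y, -, rfl⟩; exact norm_nonneg _⟩ ⟨y, hy, rfl⟩

theorem sigmaMin_eq_zero_of_forall_nrm2_ne_one (h : ∀ y : Fin d → ℂ, nrm2 y ≠ 1) :
    sigmaMin M = 0 := by
  unfold sigmaMin
  convert Real.sInf_empty
  exact Set.eq_empty_of_forall_notMem fun _ ⟨y, hy, _⟩ ↦ h y hy

variable {M N}

theorem sigmaMax_le_mul_sigmaMax {c : ℝ} (hc : 0 ≤ c)
    (h : ∀ y, nrm2 (M *ᵥ y) ≤ c * nrm2 (N *ᵥ y)) : sigmaMax M ≤ c * sigmaMax N :=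
  Real.sSup_le
    (by
      rintro _ ⟨y, hy, rfl⟩
      exact (h y).trans (mul_le_mul_of_nonneg_left (nrm2_mulVec_le_sigmaMax N hy) hc))
    (mul_nonneg hc (sigmaMax_nonneg N))

theorem mul_sigmaMin_le_sigmaMin {c : ℝ} (hc : 0 ≤ c)
    (h : ∀ y, c * nrm2 (N *ᵥ y) ≤ nrm2 (M *ᵥ y)) : c * sigmaMin N ≤ sigmaMin M := by
  by_cases hunit : ∃ y : Fin d → ℂ, nrm2 y = 1
  · obtain ⟨y₀, hy₀⟩ := hunit
    refine le_csInf ⟨_, y₀, hy₀, rfl⟩ ?_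
    rintro _ ⟨y, hy, rfl⟩
    exact (mul_le_mul_of_nonneg_left (sigmaMin_le_nrm2_mulVec N hy) hc).trans (h y)
  · push Not at hunit
    simp [sigmaMin_eq_zero_of_forall_nrm2_ne_one _ hunit]

theorem sigmaMax_mem_Icc {a b : ℝ} (ha : 0 < a) (hb : 0 ≤ b)
    (h : ∀ y, nrm2 (M *ᵥ y) ∈ Set.Icc (a * nrm2 (N *ᵥ y)) (b * nrm2 (N *ᵥ y))) :
    sigmaMax M ∈ Set.Icc (a * sigmaMax N) (b * sigmaMax N) := by
  refine ⟨?_, sigmaMax_le_mul_sigmaMax hb fun y ↦ (h y).2⟩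
  have : sigmaMax N ≤ a⁻¹ * sigmaMax M :=
    sigmaMax_le_mul_sigmaMax (inv_nonneg.2 ha.le) fun y ↦ by
      rw [inv_mul_eq_div, le_div_iff₀' ha]; exact (h y).1
  rwa [le_inv_mul_iff₀ ha] at this

theorem sigmaMin_mem_Icc {a b : ℝ} (ha : 0 ≤ a) (hb : 0 < b)
    (h : ∀ y, nrm2 (M *ᵥ y) ∈ Set.Icc (a * nrm2 (N *ᵥ y)) (b * nrm2 (N *ᵥ y))) :
    sigmaMin M ∈ Set.Icc (a * sigmaMin N) (b * sigmaMin N) := by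
  refine ⟨mul_sigmaMin_le_sigmaMin ha fun y ↦ (h y).1, ?_⟩
  have : b⁻¹ * sigmaMin M ≤ sigmaMin N :=
    mul_sigmaMin_le_sigmaMin (inv_nonneg.2 hb.le) fun y ↦ by
      rw [inv_mul_eq_div, div_le_iff₀' hb]; exact (h y).2
  rwa [inv_mul_le_iff₀ hb] at this

theorem condNum_mem_Icc {a b : ℝ} (ha : 0 < a) (hb : 0 < b)
    (h : ∀ y, nrm2 (M *ᵥ y) ∈ Set.Icc (a * nrm2 (N *ᵥ y)) (b * nrm2 (N *ᵥ y))) :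
    condNum N ∈ Set.Icc (a / b * condNum M) (b / a * condNum M) :=
  div_mem_Icc_of_mem_Icc ha hb (sigmaMax_nonneg N) (sigmaMin_nonneg N)
    (sigmaMax_mem_Icc ha hb.le h) (sigmaMin_mem_Icc ha.le hb h)

end SingularValues

theorem condition_number_diagnostic_general
    {n d s : ℕ} (B : Matrix (Fin n) (Fin d) ℂ)
    (S : Matrix (Fin s) (Fin n) ℂ) (ε : ℝ) (hε : ε ∈ Set.Ioo (0 : ℝ) 1)
    (hS : ∀ v ∈ Submodule.span ℂ (Set.range Bᵀ),
      (1 - ε) * nrm2 v ≤ nrm2 (S.mulVec v) ∧ nrm2 (S.mulVec v) ≤ (1 + ε) * nrm2 v)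
    (U : Matrix (Fin s) (Fin d) ℂ) (T : Matrix (Fin d) (Fin d) ℂ)
    (hU : Uᴴ * U = 1) (hQR : S * B = U * T) :
    (1 - ε) / (1 + ε) * (sigmaMax T / sigmaMin T) ≤ sigmaMax B / sigmaMin B ∧
      sigmaMax B / sigmaMin B ≤ (1 + ε) / (1 - ε) * (sigmaMax T / sigmaMin T) := by
  obtain ⟨hε₀, hε₁⟩ := hε
  have hTB : ∀ y,
      nrm2 (T *ᵥ y) ∈ Set.Icc ((1 - ε) * nrm2 (B *ᵥ y)) ((1 + ε) * nrm2 (B *ᵥ y)) := by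
    intro y
    have hBy : B *ᵥ y ∈ Submodule.span ℂ (Set.range Bᵀ) := by
      rw [show Set.range Bᵀ = Set.range B.col from rfl, ← range_mulVecLin]
      exact ⟨y, rfl⟩
    have hSBy : S *ᵥ (B *ᵥ y) = U *ᵥ (T *ᵥ y) := by
      rw [mulVec_mulVec, mulVec_mulVec, hQR]
    have := hS _ hBy
    rwa [hSBy, nrm2_mulVec_of_conjTranspose_mul_self_eq_one hU] at this
  exact condNum_mem_Icc (sub_pos.2 hε₁) (by linarith) hTB

/-- Condition number diagnostic: κ₂(T) from a QR factorization of the sketched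
basis estimates κ₂(B) up to distortion factors. -/
theorem condition_number_diagnostic
    {n d s : ℕ} (B : Matrix (Fin n) (Fin d) ℂ) (hB : B.rank = d)
    (S : Matrix (Fin s) (Fin n) ℂ) (ε : ℝ) (hε : ε ∈ Set.Ioo (0 : ℝ) 1)
    (hS : ∀ v ∈ Submodule.span ℂ (Set.range Bᵀ),
      (1 - ε) * nrm2 v ≤ nrm2 (S.mulVec v) ∧ nrm2 (S.mulVec v) ≤ (1 + ε) * nrm2 v)
    (U : Matrix (Fin s) (Fin d) ℂ) (T : Matrix (Fin d) (Fin d) ℂ)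
    (hU : Uᴴ * U = 1) (hT : IsUnit T) (hQR : S * B = U * T) :
    (1 - ε) / (1 + ε) * (sigmaMax T / sigmaMin T) ≤ sigmaMax B / sigmaMin B ∧
      sigmaMax B / sigmaMin B ≤ (1 + ε) / (1 - ε) * (sigmaMax T / sigmaMin T) :=
  condition_number_diagnostic_general B S ε hε hS U T hU hQR
end

section
/- Let A ∈ ℂ^{n×n}, f ∈ ℂ^n, B ∈ ℂ^{n×d}, x₀ ∈ ℂ^n, and set r₀ = f − Ax₀. Let S ∈ ℂ^{s×n} be a subspace embedding with distortion ε ∈ (0,1) for the column span of [AB, r₀]. Suppose y_B ∈ ℂ^d minimizes y ↦ ‖AB·y − r₀‖₂ and ŷ ∈ ℂ^d minimizes y ↦ ‖S(AB·y − r₀)‖₂. Then the approximate solutions x_B = x₀ + B·y_B and x̂ = x₀ + B·ŷ satisfy ‖A·x_B − f‖₂ ≤ ‖A·x̂ − f‖₂ ≤ ((1+ε)/(1−ε))·‖A·x_B − f‖₂. -/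
open Matrix

lemma nrm2_nonneg {n : ℕ} (v : Fin n → ℂ) : 0 ≤ nrm2 v := norm_nonneg _

lemma mem_span_aux {n d : ℕ} (M : Matrix (Fin n) (Fin d) ℂ) (r : Fin n → ℂ)
    (y : Fin d → ℂ) :
    M.mulVec y - r ∈ Submodule.span ℂ (Set.range Mᵀ ∪ {r}) := by
  have hM : M.mulVec y = ∑ j, y j • Mᵀ j := by
    ext i
    simp [Matrix.mulVec, dotProduct, Finset.sum_apply, Matrix.transpose_apply,
      mul_comm]
  rw [hM, sub_eq_add_neg]
  refine Submodule.add_mem _ (Submodule.sum_mem _ fun j _ => Submodule.smul_mem _ _ ?_)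
    (Submodule.neg_mem _ ?_)
  · exact Submodule.subset_span (Or.inl ⟨j, rfl⟩)
  · exact Submodule.subset_span (Or.inr rfl)

/-- sGMRES a priori guarantee: the residual of the sketched GMRES solution is
within a constant factor of the GMRES residual. -/
theorem sGMRES_residual_comparison
    {n d s : ℕ} (A : Matrix (Fin n) (Fin n) ℂ) (f : Fin n → ℂ)
    (B : Matrix (Fin n) (Fin d) ℂ) (x₀ : Fin n → ℂ) (r₀ : Fin n → ℂ)
    (hr₀ : r₀ = f - A.mulVec x₀)
    (S : Matrix (Fin s) (Fin n) ℂ) (ε : ℝ) (hε : ε ∈ Set.Ioo (0 : ℝ) 1)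
    (hS : ∀ v ∈ Submodule.span ℂ (Set.range (A * B)ᵀ ∪ {r₀}),
      (1 - ε) * nrm2 v ≤ nrm2 (S.mulVec v) ∧ nrm2 (S.mulVec v) ≤ (1 + ε) * nrm2 v)
    (yB yhat : Fin d → ℂ)
    (hyB : ∀ y : Fin d → ℂ, nrm2 ((A * B).mulVec yB - r₀) ≤ nrm2 ((A * B).mulVec y - r₀))
    (hyhat : ∀ y : Fin d → ℂ,
      nrm2 (S.mulVec ((A * B).mulVec yhat - r₀)) ≤ nrm2 (S.mulVec ((A * B).mulVec y - r₀))) :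
    nrm2 (A.mulVec (x₀ + B.mulVec yB) - f) ≤ nrm2 (A.mulVec (x₀ + B.mulVec yhat) - f) ∧
      nrm2 (A.mulVec (x₀ + B.mulVec yhat) - f) ≤
        (1 + ε) / (1 - ε) * nrm2 (A.mulVec (x₀ + B.mulVec yB) - f) := by
  obtain ⟨hε0, hε1⟩ := hε
  have key : ∀ y : Fin d → ℂ,
      A.mulVec (x₀ + B.mulVec y) - f = (A * B).mulVec y - r₀ := by
    intro y
    rw [hr₀]
    ext i
    simp [Matrix.mulVec_add, Matrix.mulVec_mulVec]
    ring
  rw [key yB, key yhat]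
  have h1ε : (0:ℝ) < 1 - ε := by linarith
  have hvB := hS _ (mem_span_aux (A * B) r₀ yB)
  have hvh := hS _ (mem_span_aux (A * B) r₀ yhat)
  constructor
  · exact hyB yhat
  · have c1 : (1 - ε) * nrm2 ((A * B).mulVec yhat - r₀) ≤
        (1 + ε) * nrm2 ((A * B).mulVec yB - r₀) :=
      le_trans hvh.1 (le_trans (hyhat yB) hvB.2)
    rw [div_mul_eq_mul_div, le_div_iff₀ h1ε]
    linarith [c1]
end
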